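/- Let C be an augmented ℤ_p-chain complex and φ_j a resolution of 1 for C. Let n ≥ 1 and suppose the degree-n class of the resolution vanishes in the following sense: if n is even, sφ_n = δ(sψ) for some cochain ψ ∈ C^{n−1}; if n is odd, dφ_n = δ(dψ) for some cochain ψ ∈ C^{n−1}. Then there is a resolution φ̄_j of 1 for C with φ̄_j = φ_j for all j < n−1, with φ̄_{n−1} = φ_{n−1} − sψ if n is even and φ̄_{n−1} = φ_{n−1} − dψ if n is odd, and with φ̄_j = 0 for all j ≥ n. -/

import Mathlib

open scoped TensorProduct

/-- An augmented `ℤ_p`-chain complex: a `ℤ_p`-chain complex indexed by degrees `≥ −1`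
whose degree-`(−1)` chain group is infinite cyclic with a chosen generator `∅` fixed by
`t`.  Here `C n` is the chain group in degree `n − 1` (so `C 0` is the augmentation
degree, identified with `ℤ` by `base`, the generator `∅` corresponding to `1`). -/
structure AugComplex (p : ℕ) where
  C : ℕ → Type
  [acg : ∀ n, AddCommGroup (C n)]
  bd : ∀ n, C (n + 1) →+ C n
  bd_bd : ∀ n x, bd n (bd (n + 1) x) = 0
  t : ∀ n, C n →+ C n
  t_bd : ∀ n x, t n (bd n x) = bd n (t (n + 1) x)
  t_pow : ∀ n x, (⇑(t n))^[p] x = x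
  base : C 0 ≃+ ℤ
  t_base : ∀ x, t 0 x = x

attribute [instance] AugComplex.acg

namespace AugComplex

variable {p : ℕ} (X : AugComplex p)

/-- cochains: `Co n = Hom(C n, ℤ)` is the group of cochains in degree `n − 1`. -/
abbrev Co (n : ℕ) := X.C n →+ ℤ

/-- the chain map `t^k` -/
def tpow (n : ℕ) : ℕ → (X.C n →+ X.C n)
  | 0 => AddMonoidHom.id _
  | k + 1 => (X.t n).comp (tpow n k)

/-- `s = 1 + t + ⋯ + t^{p−1}` on chains -/
def sCh (n : ℕ) : X.C n →+ X.C n := ∑ k ∈ Finset.range p, X.tpow n k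

/-- `d = 1 − t` on chains -/
def dCh (n : ℕ) : X.C n →+ X.C n := AddMonoidHom.id _ - X.t n

/-- the coboundary `δφ = φ ∘ ∂` -/
def cb (n : ℕ) : X.Co n →+ X.Co (n + 1) where
  toFun φ := φ.comp (X.bd n)
  map_zero' := by ext x; simp
  map_add' _ _ := by ext x; simp

/-- the cochain map `t^k` -/
def tCo (n k : ℕ) : X.Co n →+ X.Co n where
  toFun φ := φ.comp (X.tpow n k)
  map_zero' := by ext x; simp
  map_add' _ _ := by ext x; simp

/-- `s = 1 + t + ⋯ + t^{p−1}` on cochains -/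
def sCo (n : ℕ) : X.Co n →+ X.Co n where
  toFun φ := φ.comp (X.sCh n)
  map_zero' := by ext x; simp
  map_add' _ _ := by ext x; simp

/-- `d = 1 − t` on cochains -/
def dCo (n : ℕ) : X.Co n →+ X.Co n where
  toFun φ := φ.comp (X.dCh n)
  map_zero' := by ext x; simp
  map_add' _ _ := by ext x; simp

/-- the cochain `1_C = δ(∅*) ∈ C^0` -/
def one : X.Co 1 := X.base.toAddMonoidHom.comp (X.bd 0)

/-- `φ_0, φ_1, φ_2, …` is a resolution of `1` for `X`:  `sφ_0 = 1`, `δφ_j = dφ_{j+1}`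
for even `j`, and `δφ_j = sφ_{j+1}` for odd `j`.  (Here `φ j : Co (j+1)` is the
cochain in degree `j`.) -/
def IsRes (φ : ∀ j : ℕ, X.Co (j + 1)) : Prop :=
  X.sCo 1 (φ 0) = X.one ∧
  (∀ j, Even j → X.cb (j + 1) (φ j) = X.dCo (j + 2) (φ (j + 1))) ∧
  (∀ j, Odd j → X.cb (j + 1) (φ j) = X.sCo (j + 2) (φ (j + 1)))

/-- transport of cochains along an equality of degrees -/
def castCoX {m n : ℕ} (h : m = n) (f : X.Co m) : X.Co n := h ▸ f

end AugComplex

open AugComplex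

/-!
Write `op_j` (`resOp j` below) for `d` when `j` is even and for `s` when `j` is odd, so
that a resolution is `sφ_0 = 1` together with `δφ_j = op_j φ_{j+1}` for all `j`, and the
vanishing hypothesis in degree `n = m + 1` reads `op_m φ_{m+1} = δ(op_m ψ)`. Replace `φ_m`
by `φ_m − op_m ψ` and all higher cochains by `0`. Since `op_{m−1} ∘ op_m` is `ds` or `sd`,
which vanish because `(1 − t)(1 + t + ⋯ + t^{p−1}) = 1 − t^p = 0`, the equation in degree
`m − 1` survives, and the equation in degree `m` becomes `δφ_m − δ(op_m ψ) = 0`, which is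
the hypothesis.
-/

namespace AugComplex

variable {p : ℕ} (X : AugComplex p)

theorem tpow_eq_iterate (n k : ℕ) (x : X.C n) : X.tpow n k x = (⇑(X.t n))^[k] x := by
  induction k with
  | zero => rfl
  | succ k ih => rw [Function.iterate_succ_apply', ← ih]; rfl

theorem tpow_t (n k : ℕ) (x : X.C n) : X.tpow n k (X.t n x) = X.tpow n (k + 1) x := by
  rw [tpow_eq_iterate, tpow_eq_iterate, Function.iterate_succ_apply]

theorem tpow_p_apply (n : ℕ) (x : X.C n) : X.tpow n p x = x := by
  rw [tpow_eq_iterate, X.t_pow]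

theorem sum_range_tpow_sub_tpow_succ (n : ℕ) (x : X.C n) :
    ∑ k ∈ Finset.range p, (X.tpow n k x - X.tpow n (k + 1) x) = 0 := by
  rw [Finset.sum_range_sub', tpow_p_apply]
  exact sub_self x

theorem dCh_sCh (n : ℕ) (x : X.C n) : X.dCh n (X.sCh n x) = 0 := by
  rw [← X.sum_range_tpow_sub_tpow_succ n x]
  simp only [dCh, sCh, AddMonoidHom.sub_apply, AddMonoidHom.id_apply, AddMonoidHom.finsetSum_apply,
    map_sum]
  rfl

theorem sCh_dCh (n : ℕ) (x : X.C n) : X.sCh n (X.dCh n x) = 0 := by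
  rw [← X.sum_range_tpow_sub_tpow_succ n x]
  simp only [dCh, sCh, AddMonoidHom.sub_apply, AddMonoidHom.id_apply, AddMonoidHom.finsetSum_apply,
    map_sub, tpow_t, ← Finset.sum_sub_distrib]

theorem dCo_sCo (n : ℕ) (f : X.Co n) : X.dCo n (X.sCo n f) = 0 := by
  ext x
  simp [dCo, sCo, sCh_dCh]

theorem sCo_dCo (n : ℕ) (f : X.Co n) : X.sCo n (X.dCo n f) = 0 := by
  ext x
  simp [dCo, sCo, dCh_sCh]

def resOp (j k : ℕ) : X.Co k →+ X.Co k := if Even j then X.dCo k else X.sCo k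

theorem resOp_of_even {j : ℕ} (hj : Even j) (k : ℕ) : X.resOp j k = X.dCo k := if_pos hj

theorem resOp_of_odd {j : ℕ} (hj : Odd j) (k : ℕ) : X.resOp j k = X.sCo k :=
  if_neg (Nat.not_even_iff_odd.mpr hj)

theorem resOp_resOp_succ (j k : ℕ) (f : X.Co k) : X.resOp j k (X.resOp (j + 1) k f) = 0 := by
  rcases Nat.even_or_odd j with hj | hj
  · rw [X.resOp_of_even hj, X.resOp_of_odd hj.add_one, dCo_sCo]
  · rw [X.resOp_of_odd hj, X.resOp_of_even hj.add_one, sCo_dCo]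

theorem isRes_iff (φ : ∀ j, X.Co (j + 1)) :
    X.IsRes φ ↔
      X.sCo 1 (φ 0) = X.one ∧ ∀ j, X.cb (j + 1) (φ j) = X.resOp j (j + 2) (φ (j + 1)) := by
  refine and_congr_right fun _ => ⟨fun ⟨heven, hodd⟩ j => ?_, fun h => ⟨fun j hj => ?_, fun j hj => ?_⟩⟩
  · rcases Nat.even_or_odd j with hj | hj
    · rw [X.resOp_of_even hj]; exact heven j hj
    · rw [X.resOp_of_odd hj]; exact hodd j hj
  · rw [h, X.resOp_of_even hj]
  · rw [h, X.resOp_of_odd hj]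

def truncate (φ : ∀ j, X.Co (j + 1)) (m : ℕ) (θ : X.Co (m + 1)) : ∀ j, X.Co (j + 1) :=
  fun j => if h : m + 1 = j + 1 then X.castCoX h (φ m - θ) else if j < m then φ j else 0

variable {X}

section truncate

variable (φ : ∀ j, X.Co (j + 1)) {m : ℕ} (θ : X.Co (m + 1))

theorem truncate_of_lt {j : ℕ} (hj : j < m) : X.truncate φ m θ j = φ j := by
  rw [truncate, dif_neg (by omega), if_pos hj]

theorem truncate_self : X.truncate φ m θ m = φ m - θ := dif_pos rfl

theorem truncate_of_gt {j : ℕ} (hj : m < j) : X.truncate φ m θ j = 0 := by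
  rw [truncate, dif_neg (by omega), if_neg (by omega)]

end truncate

theorem isRes_truncate {φ : ∀ j, X.Co (j + 1)} (hφ : X.IsRes φ) {m : ℕ} {ψ : X.Co (m + 1)}
    (hψ : X.resOp m (m + 2) (φ (m + 1)) = X.cb (m + 1) (X.resOp m (m + 1) ψ)) :
    X.IsRes (X.truncate φ m (X.resOp m (m + 1) ψ)) := by
  rw [isRes_iff] at hφ ⊢
  obtain ⟨h0, hstep⟩ := hφ
  refine ⟨?_, fun j => ?_⟩
  · rcases m.eq_zero_or_pos with rfl | hm
    · rw [truncate_self, map_sub, X.resOp_of_even Even.zero, sCo_dCo, sub_zero]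
      exact h0
    · rw [truncate_of_lt _ _ hm]
      exact h0
  · rcases lt_trichotomy (j + 1) m with hj | rfl | hj
    · rw [truncate_of_lt _ _ (by omega), truncate_of_lt _ _ hj]
      exact hstep j
    · rw [truncate_of_lt _ _ (by omega), truncate_self, map_sub, resOp_resOp_succ, sub_zero]
      exact hstep j
    · obtain rfl | hj : j = m ∨ m < j := by omega
      · rw [truncate_self, truncate_of_gt _ _ (by omega), map_sub, hstep, hψ, sub_self, map_zero]
      · rw [truncate_of_gt _ _ hj, truncate_of_gt _ _ (by omega), map_zero, map_zero]

end AugComplex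

/-- **Shortening of a resolution.**
Let `C` be an augmented `ℤ_p`-chain complex and `φ_j` a resolution of `1` for `C`.
Let `n ≥ 1` and suppose the degree-`n` class of the resolution vanishes: if `n` is even,
`sφ_n = δ(sψ)` for some cochain `ψ ∈ C^{n−1}`, and if `n` is odd, `dφ_n = δ(dψ)` for
some cochain `ψ ∈ C^{n−1}`.  Then there is a resolution `φ̄_j` of `1` for `C` with
`φ̄_j = φ_j` for `j < n−1`, with `φ̄_{n−1} = φ_{n−1} − sψ` if `n` is even and
`φ̄_{n−1} = φ_{n−1} − dψ` if `n` is odd, and with `φ̄_j = 0` for all `j ≥ n`. -/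
theorem shortening_of_resolution
    (p : ℕ) (X : AugComplex p)
    (φ : ∀ j, X.Co (j + 1)) (hres : X.IsRes φ)
    (n : ℕ) (hn : 1 ≤ n) (ψ : X.Co n)
    (he : Even n → X.sCo (n + 1) (φ n) = X.cb n (X.sCo n ψ))
    (ho : Odd n → X.dCo (n + 1) (φ n) = X.cb n (X.dCo n ψ)) :
    ∃ φbar : ∀ j, X.Co (j + 1),
      X.IsRes φbar ∧
      (∀ j, j < n - 1 → φbar j = φ j) ∧
      (Even n → φbar (n - 1) = φ (n - 1) - X.castCoX (by omega) (X.sCo n ψ)) ∧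
      (Odd n → φbar (n - 1) = φ (n - 1) - X.castCoX (by omega) (X.dCo n ψ)) ∧
      (∀ j, n ≤ j → φbar j = 0) := by
  obtain ⟨m, rfl⟩ : ∃ m, n = m + 1 := ⟨n - 1, by omega⟩
  have hψ : X.resOp m (m + 2) (φ (m + 1)) = X.cb (m + 1) (X.resOp m (m + 1) ψ) := by
    rcases Nat.even_or_odd m with hm | hm
    · rw [X.resOp_of_even hm, X.resOp_of_even hm]
      exact ho hm.add_one
    · rw [X.resOp_of_odd hm, X.resOp_of_odd hm]
      exact he hm.add_one
  refine ⟨X.truncate φ m (X.resOp m (m + 1) ψ), isRes_truncate hres hψ,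
    fun j hj => truncate_of_lt _ _ (by omega), fun hn => ?_, fun hn => ?_,
    fun j hj => truncate_of_gt _ _ (by omega)⟩
  · rw [← X.resOp_of_odd (Nat.even_add_one.mp hn |> Nat.not_even_iff_odd.mp)]
    exact truncate_self _ _
  · rw [← X.resOp_of_even (Nat.odd_add_one.mp hn |> Nat.not_odd_iff_even.mp)]
    exact truncate_self _ _
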